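/- Let {f_t : t ∈ T} ⊂ Γ₀(X) be a nonempty family, f := sup_{t∈T} f_t, and suppose x is a global minimizer of f with x ∈ dom f. Assume the standard hypothesis (SH) holds and let 0 < ρ_t ≤ 1, t ∈ T, satisfy inf_{t∈T} ρ_t f_t(x) > −∞. Then ∂f(x) = ⋂_{ε>0} co‾( (⋃_{t∈T(x)} ∂_ε f_t(x)) ∪ (⋃_{t∈T\T(x)} ε·∂_ε(ρ_t f_t)(x)) ), where (ρ_t f_t)(z) := ρ_t f_t(z) and ε·S := {ε s : s ∈ S}. -/

import Mathlib

open Set Pointwise Topology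
open scoped Classical

noncomputable section

variable {X : Type*} [AddCommGroup X] [Module ℝ X] [TopologicalSpace X]
  [IsTopologicalAddGroup X] [ContinuousSMul ℝ X] [LocallyConvexSpace ℝ X] [T2Space X]

/-- Convexity for extended-real-valued functions. -/
def EConvexOn' (f : X → EReal) : Prop :=
  ∀ x y : X, ∀ a b : ℝ, 0 ≤ a → 0 ≤ b → a + b = 1 →
    f (a • x + b • y) ≤ (a : EReal) * f x + (b : EReal) * f y

/-- `f ∈ Γ₀(X)`: proper, convex and lower semicontinuous. -/
def Gamma0 (f : X → EReal) : Prop :=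
  (∀ x, f x ≠ ⊥) ∧ (∃ x, f x ≠ ⊤) ∧ EConvexOn' f ∧ LowerSemicontinuous f

/-- Effective domain of `f`. -/
def edom (f : X → EReal) : Set X := {x | f x ≠ ⊤}

/-- The ε-subdifferential of `f` at `x` (a subset of the weak* dual);
it is empty when `ε < 0` or `f x ∉ ℝ`. -/
def esubdiff (f : X → EReal) (x : X) (ε : ℝ) : Set (WeakDual ℝ X) :=
  {p | 0 ≤ ε ∧ f x ≠ ⊤ ∧ f x ≠ ⊥ ∧
    ∀ y : X, f x + ((p y - p x - ε : ℝ) : EReal) ≤ f y}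

/-- Normal cone to `A` at `x` (empty when `x ∉ A`). -/
def normalCone (A : Set X) (x : X) : Set (WeakDual ℝ X) :=
  {p | x ∈ A ∧ ∀ y ∈ A, p y - p x ≤ 0}

/-- Recession cone of a set. -/
def recCone {V : Type*} [AddCommMonoid V] [Module ℝ V] (C : Set V) : Set V :=
  {y | ∃ c ∈ C, ∀ l : ℝ, 0 ≤ l → c + l • y ∈ C}

/-- Closed convex hull of a set. -/
def cclo {V : Type*} [AddCommMonoid V] [Module ℝ V] [TopologicalSpace V] (S : Set V) : Set V :=
  closure (convexHull ℝ S)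

/-- `sMul l f` is the function `l·f`, with the convention `0·f = I_{dom f}`
(i.e. `(l·f) z = +∞` whenever `f z = +∞`). -/
def sMul (l : ℝ) (f : X → EReal) : X → EReal :=
  fun z => if f z = ⊤ then ⊤ else (l : EReal) * f z


/-!
For `⊇`: every generator of the hulls lies in the half-space
`{q | q (y - x) ≤ f y - f x + O(ε)}`. For an active index this is the `ε`-subgradient inequality;
for an inactive one, `ρ_t ≤ 1` and `inf_t ρ_t f_t(x) > -∞` bound `∂_ε(ρ_t f_t)(x)` in the
direction `y - x` uniformly in `t`, and as `f y ≥ f x` the factor `ε` makes this contribution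
negligible. Letting `ε → 0` gives `p ∈ ∂f(x)`.

For `⊆`: if `p ∈ ∂f(x)` is strictly separated from the hull by a direction `z` and a level
`γ < p z`, the `ε`-directional derivative formula (proved by separating the epigraph from a
compact segment) shows that every `f_t` lies below `f x + s γ` at `x + s z` for small `s > 0`,
locally uniformly in `t` by upper semicontinuity in `t` and convexity in `x`. Compactness of `T`
gives one `s` that works for all `t`, so `f (x + s z) ≤ f x + s γ < f x + s p z`, contradicting
the subgradient inequality.
-/

open Filter

theorem sMul_eq_mul {E : Type*} {ρ : ℝ} (hρ : 0 < ρ) (f : E → EReal) :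
    sMul ρ f = fun z => (ρ : EReal) * f z := by
  ext z
  by_cases h : f z = ⊤
  · simp [sMul, h, EReal.mul_top_of_pos (EReal.coe_pos.2 hρ)]
  · simp [sMul, h]

theorem sMul_le_max {E : Type*} {ρ : ℝ} (hρ : 0 < ρ) (hρ₁ : ρ ≤ 1) {f : E → EReal} {y : E}
    {b : ℝ} (hy : f y ≤ b) : sMul ρ f y ≤ ((max b 0 : ℝ) : EReal) := by
  simp only [sMul_eq_mul hρ]
  by_cases hbot : f y = ⊥
  · simp [hbot, EReal.coe_mul_bot_of_pos hρ]
  obtain ⟨v, hv⟩ : ∃ v : ℝ, f y = v :=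
    ⟨(f y).toReal, (EReal.coe_toReal (ne_top_of_le_ne_top (EReal.coe_ne_top b) hy) hbot).symm⟩
  rw [hv, EReal.coe_le_coe_iff] at hy
  rw [hv, ← EReal.coe_mul, EReal.coe_le_coe_iff]
  rcases le_total v 0 with hv₀ | hv₀
  · exact (mul_nonpos_of_nonneg_of_nonpos hρ.le hv₀).trans (le_max_right _ _)
  · nlinarith [le_max_left b 0]

theorem LowerSemicontinuous.sMul {E : Type*} [TopologicalSpace E] {ρ : ℝ} (hρ : 0 < ρ)
    {f : E → EReal} (hf : LowerSemicontinuous f) : LowerSemicontinuous (sMul ρ f) := by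
  rw [sMul_eq_mul hρ]
  have hcont : Continuous fun e : EReal => (ρ : EReal) * e :=
    continuous_iff_continuousAt.2 fun e => EReal.Tendsto.const_mul tendsto_id
      (Or.inl (EReal.coe_ne_bot ρ)) (Or.inl (EReal.coe_ne_top ρ))
  exact hcont.comp_lowerSemicontinuous hf
    fun _ _ h => mul_le_mul_of_nonneg_left h (EReal.coe_nonneg.2 hρ.le)

theorem LowerSemicontinuous.isClosed_epigraph_coe {E : Type*} [TopologicalSpace E]
    {g : E → EReal} (hg : LowerSemicontinuous g) : IsClosed {p : E × ℝ | g p.1 ≤ p.2} :=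
  (lowerSemicontinuous_iff_isClosed_epigraph.1 hg).preimage
    (continuous_fst.prodMk (continuous_coe_real_ereal.comp continuous_snd))

section Convexity

variable {E : Type*} [AddCommGroup E] [Module ℝ E]

theorem EConvexOn'.apply_combo_le {g : E → EReal} (hg : EConvexOn' g) {w₁ w₂ : E}
    {a b c₁ c₂ : ℝ} (ha : 0 ≤ a) (hb : 0 ≤ b) (hab : a + b = 1)
    (h₁ : g w₁ ≤ c₁) (h₂ : g w₂ ≤ c₂) :
    g (a • w₁ + b • w₂) ≤ ((a * c₁ + b * c₂ : ℝ) : EReal) :=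
  calc g (a • w₁ + b • w₂) ≤ (a : EReal) * g w₁ + (b : EReal) * g w₂ := hg w₁ w₂ a b ha hb hab
    _ ≤ (a : EReal) * c₁ + (b : EReal) * c₂ :=
      add_le_add (mul_le_mul_of_nonneg_left h₁ (EReal.coe_nonneg.2 ha))
        (mul_le_mul_of_nonneg_left h₂ (EReal.coe_nonneg.2 hb))
    _ = ((a * c₁ + b * c₂ : ℝ) : EReal) := by norm_cast

theorem EConvexOn'.apply_add_smul_le {g : E → EReal} (hg : EConvexOn' g) {x z : E}
    {s₁ s a c : ℝ} (hs₁ : 0 < s₁) (hs : 0 ≤ s) (hss₁ : s ≤ s₁)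
    (hx : g x ≤ a) (hz : g (x + s₁ • z) ≤ c) :
    g (x + s • z) ≤ ((a + s / s₁ * (c - a) : ℝ) : EReal) := by
  have hθ : s / s₁ ≤ 1 := (div_le_one hs₁).2 hss₁
  have hpt : (1 - s / s₁) • x + (s / s₁) • (x + s₁ • z) = x + s • z := by
    match_scalars <;> field_simp; ring
  have := hg.apply_combo_le (sub_nonneg.2 hθ) (div_nonneg hs hs₁.le) (by ring) hx hz
  rw [hpt] at this
  exact this.trans_eq (by congr 1; ring)

theorem EConvexOn'.convex_epigraph {g : E → EReal} (hg : EConvexOn' g) :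
    Convex ℝ {p : E × ℝ | g p.1 ≤ p.2} :=
  fun _ hp _ hq _ _ ha hb hab => hg.apply_combo_le ha hb hab hp hq

theorem EConvexOn'.sMul {ρ : ℝ} (hρ : 0 < ρ) {f : E → EReal} (hf : EConvexOn' f) :
    EConvexOn' (sMul ρ f) := by
  intro w₁ w₂ a b ha hb hab
  rw [sMul_eq_mul hρ]
  calc (ρ : EReal) * f (a • w₁ + b • w₂) ≤ ρ * ((a : EReal) * f w₁ + (b : EReal) * f w₂) :=
        mul_le_mul_of_nonneg_left (hf w₁ w₂ a b ha hb hab) (EReal.coe_nonneg.2 hρ.le)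
    _ = (a : EReal) * (ρ * f w₁) + (b : EReal) * (ρ * f w₂) := by
        rw [EReal.left_distrib_of_nonneg_of_ne_top (EReal.coe_nonneg.2 hρ.le)
          (EReal.coe_ne_top ρ), mul_left_comm, mul_left_comm (ρ : EReal)]

theorem disjoint_segment_epigraph {g : E → EReal} {x z : E} {gx ε c k γ : ℝ} (hgx : g x = gx)
    (hε : 0 < ε) (hc : 0 < c) (hkγ : k < γ)
    (hslope : ∀ s, 0 < s → ((gx - ε + s * γ : ℝ) : EReal) ≤ g (x + s • z)) :
    Disjoint (segment ℝ ((x, gx - ε) : E × ℝ) (x + c • z, gx - ε + c * k))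
      {p : E × ℝ | g p.1 ≤ p.2} := by
  rw [segment_eq_image', Set.disjoint_left]
  rintro _ ⟨θ, ⟨hθ, -⟩, rfl⟩ hle
  simp only [mem_ofPred_eq, Prod.mk_sub_mk, Prod.smul_mk, Prod.mk_add_mk, add_sub_cancel_left,
    smul_smul, smul_eq_mul] at hle
  rcases hθ.eq_or_lt with rfl | hθ
  · simp only [zero_mul, zero_smul, add_zero, hgx, EReal.coe_le_coe_iff] at hle
    linarith
  · have := (hslope (θ * c) (mul_pos hθ hc)).trans hle
    rw [EReal.coe_le_coe_iff] at this
    nlinarith [mul_lt_mul_of_pos_left hkγ (mul_pos hθ hc)]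

end Convexity

theorem isCompact_segment {F : Type*} [AddCommGroup F] [Module ℝ F] [TopologicalSpace F]
    [ContinuousAdd F] [ContinuousSMul ℝ F] (a b : F) : IsCompact (segment ℝ a b) := by
  rw [segment_eq_image]
  exact isCompact_Icc.image (by fun_prop)

section Subdifferential

variable {E : Type*} [AddCommGroup E] [Module ℝ E] [TopologicalSpace E]

theorem apply_sub_le_of_mem_esubdiff {g : E → EReal} {x y : E} {ε a b : ℝ}
    {q : WeakDual ℝ E} (hq : q ∈ esubdiff g x ε) (ha : (a : EReal) ≤ g x) (hb : g y ≤ b) :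
    q (y - x) ≤ b - a + ε := by
  have := (add_le_add ha le_rfl).trans ((hq.2.2.2 y).trans hb)
  rw [← EReal.coe_add, EReal.coe_le_coe_iff] at this
  rw [map_sub]
  linarith

theorem apply_le_of_mem_cclo {S : Set (WeakDual ℝ E)} {p : WeakDual ℝ E} {w : E} {c : ℝ}
    (hS : ∀ q ∈ S, q w ≤ c) (hp : p ∈ cclo S) : p w ≤ c :=
  closure_minimal (convexHull_min hS (convex_halfSpace_le
    ⟨fun _ _ => rfl, fun _ _ => rfl⟩ c)) (isClosed_le (WeakDual.eval_continuous w)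
    continuous_const) hp

theorem exists_apply_lt_of_notMem_cclo {S : Set (WeakDual ℝ E)} {p : WeakDual ℝ E}
    (hp : p ∉ cclo S) : ∃ (z : E) (u : ℝ), (∀ q ∈ S, q z < u) ∧ u < p z := by
  have : LocallyConvexSpace ℝ (WeakDual ℝ E) := WeakBilin.locallyConvexSpace
  obtain ⟨φ, u, hlt, hu⟩ :=
    geometric_hahn_banach_closed_point (convex_convexHull ℝ S).closure isClosed_closure hp
  obtain ⟨z, rfl⟩ := LinearMap.dualEmbedding_surjective (topDualPairing ℝ E) φ
  exact ⟨z, u, fun q hq => hlt q (subset_closure (subset_convexHull ℝ S hq)), hu⟩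

end Subdifferential

section LocallyConvex

variable {E : Type*} [AddCommGroup E] [Module ℝ E] [TopologicalSpace E] [IsTopologicalAddGroup E]
  [ContinuousSMul ℝ E] [LocallyConvexSpace ℝ E]

theorem exists_mem_esubdiff_lt_apply {g : E → EReal} (hconv : EConvexOn' g)
    (hlsc : LowerSemicontinuous g) {x z : E} {gx ε β γ : ℝ} (hgx : g x = gx) (hε : 0 < ε)
    (hβγ : β < γ) (hslope : ∀ s, 0 < s → ((gx - ε + s * γ : ℝ) : EReal) ≤ g (x + s • z)) :
    ∃ q ∈ esubdiff g x ε, β < q z := by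
  obtain ⟨k, hβk, hkγ⟩ := exists_between hβγ
  have hkβ : 0 < k - β := sub_pos.2 hβk
  obtain ⟨c, hc, hcε⟩ : ∃ c, 0 < c ∧ c * (k - β) = ε :=
    ⟨ε / (k - β), div_pos hε hkβ, div_mul_cancel₀ ε hkβ.ne'⟩
  -- Strictly separate the epigraph from the segment leaving `(x, gx - ε)` with slope `k` along `z`.
  -- Divided by its (positive) vertical component, the separating functional is `(y, r) ↦ r - q y`
  -- for an `ε`-subgradient `q`, and the far endpoint forces `q z > k - ε / c = β`.
  obtain ⟨φ, u, v, hlt, huv, hgt⟩ := geometric_hahn_banach_compact_closed (convex_segment _ _)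
    (isCompact_segment _ _) hconv.convex_epigraph hlsc.isClosed_epigraph_coe
    (disjoint_segment_epigraph hgx hε hc hkγ hslope)
  set ψ : E →L[ℝ] ℝ := φ.comp (.inl ℝ E ℝ)
  set κ := φ (0, 1)
  have hφ : ∀ y r, φ (y, r) = ψ y + r * κ := fun y r => by
    rw [show ((y, r) : E × ℝ) = (y, 0) + r • (0, 1) by simp, map_add, map_smul, smul_eq_mul]; rfl
  have hleft : ψ x + (gx - ε) * κ < u := hφ x _ ▸ hlt _ (left_mem_segment ℝ _ _)
  have hright : ψ x + c * ψ z + (gx - ε + c * k) * κ < u := by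
    simpa [hφ, map_add, map_smul] using hlt _ (right_mem_segment ℝ _ _)
  have hepi : ∀ y (r : ℝ), g y ≤ r → v < ψ y + r * κ := fun y r h => hφ y r ▸ hgt (y, r) h
  have hx : v < ψ x + gx * κ := hepi x gx hgx.le
  have hκ : 0 < κ := by nlinarith
  refine ⟨-κ⁻¹ • ψ, ⟨hε.le, by simp [hgx], by simp [hgx], fun y => ?_⟩, ?_⟩
  · rw [hgx, ← EReal.le_of_forall_lt_iff_le]
    intro r hr
    have hdiv : gx - ε - r ≤ (ψ y - ψ x) / κ := (le_div_iff₀ hκ).2 (by nlinarith [hepi y r hr.le])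
    rw [← EReal.coe_add, EReal.coe_le_coe_iff]
    change gx + (-κ⁻¹ * ψ y - -κ⁻¹ * ψ x - ε) ≤ r
    have : -κ⁻¹ * ψ y - -κ⁻¹ * ψ x = -((ψ y - ψ x) / κ) := by ring
    linarith
  · change β < -κ⁻¹ * ψ z
    have hneg : c * (ψ z + β * κ) < 0 := by nlinarith
    have := neg_of_mul_neg_right hneg hc.le
    rw [neg_mul, ← div_eq_inv_mul, lt_neg, div_lt_iff₀ hκ]
    linarith

theorem exists_pos_lt_of_forall_esubdiff_apply_le {g : E → EReal} (hconv : EConvexOn' g)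
    (hlsc : LowerSemicontinuous g) {x z : E} {gx ε β γ : ℝ} (hgx : g x = gx) (hε : 0 < ε)
    (hβγ : β < γ) (h : ∀ q ∈ esubdiff g x ε, q z ≤ β) :
    ∃ s > 0, g (x + s • z) < ((gx - ε + s * γ : ℝ) : EReal) := by
  by_contra! hslope
  obtain ⟨q, hq, hβq⟩ := exists_mem_esubdiff_lt_apply hconv hlsc hgx hε hβγ hslope
  exact (h q hq).not_gt hβq

end LocallyConvex

theorem exists_pos_forall_of_forall_eventually_nhds {T : Type*} [TopologicalSpace T]
    [CompactSpace T] {P : ℝ → T → Prop} (h : ∀ t, ∀ᶠ q : ℝ × T in 𝓝 (0, t), 0 < q.1 → P q.1 q.2) :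
    ∃ s > 0, ∀ t, P s t := by
  have hev := isCompact_univ.eventually_forall_of_forall_eventually
    (P := fun s t => 0 < s → P s t) fun t _ => h t
  obtain ⟨s, hs, hpos⟩ := ((hev.filter_mono nhdsWithin_le_nhds).and
    (self_mem_nhdsWithin (s := Ioi (0 : ℝ)))).exists
  exact ⟨s, hpos, fun t => hs t (mem_univ t) hpos⟩

section Family

variable {E T : Type*} [AddCommGroup E] [Module ℝ E] [TopologicalSpace T]
  {f : T → E → EReal} {x z : E} {m γ : ℝ}

theorem eventually_apply_add_smul_le (hconv : ∀ t, EConvexOn' (f t)) {t : T} {s₁ a c : ℝ}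
    (hs₁ : 0 < s₁) (hx : ∀ᶠ t' in 𝓝 t, f t' x ≤ a) (hz : ∀ᶠ t' in 𝓝 t, f t' (x + s₁ • z) ≤ c)
    (hbound : ∀ᶠ s in 𝓝 0, 0 < s → s ≤ s₁ ∧ a + s / s₁ * (c - a) ≤ m + s * γ) :
    ∀ᶠ q : ℝ × T in 𝓝 (0, t), 0 < q.1 → f q.2 (x + q.1 • z) ≤ ((m + q.1 * γ : ℝ) : EReal) := by
  rw [nhds_prod_eq]
  filter_upwards [hbound.prod_mk (hx.and hz)] with ⟨s, t'⟩ ⟨hs, hx', hz'⟩ hs₀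
  obtain ⟨hss₁, hle⟩ := hs hs₀
  exact ((hconv t').apply_add_smul_le hs₁ hs₀.le hss₁ hx' hz').trans (EReal.coe_le_coe_iff.2 hle)

theorem eventually_apply_add_smul_le_of_active (hconv : ∀ t, EConvexOn' (f t))
    (husc : ∀ y, UpperSemicontinuous fun t => f t y) (hm : ∀ t, f t x ≤ m) {t : T} {s₁ : ℝ}
    (hs₁ : 0 < s₁) (ht : f t (x + s₁ • z) < ((m + s₁ * γ : ℝ) : EReal)) :
    ∀ᶠ q : ℝ × T in 𝓝 (0, t), 0 < q.1 → f q.2 (x + q.1 • z) ≤ ((m + q.1 * γ : ℝ) : EReal) := by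
  refine eventually_apply_add_smul_le hconv hs₁ (.of_forall hm)
    ((husc _ t _ ht).mono fun _ => le_of_lt) ?_
  filter_upwards [eventually_lt_nhds hs₁] with s hs _
  exact ⟨hs.le, le_of_eq (by field_simp; ring)⟩

theorem eventually_apply_add_smul_le_of_inactive (hconv : ∀ t, EConvexOn' (f t))
    (husc : ∀ y, UpperSemicontinuous fun t => f t y) {t : T} {s₁ : ℝ} (hs₁ : 0 < s₁)
    (hx : f t x < m) (hz : f t (x + s₁ • z) ≠ ⊤) :
    ∀ᶠ q : ℝ × T in 𝓝 (0, t), 0 < q.1 → f q.2 (x + q.1 • z) ≤ ((m + q.1 * γ : ℝ) : EReal) := by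
  obtain ⟨a, hxa, ham⟩ := EReal.lt_iff_exists_real_btwn.1 hx
  obtain ⟨c, hzc, -⟩ := EReal.lt_iff_exists_real_btwn.1 hz.lt_top
  refine eventually_apply_add_smul_le hconv hs₁ ((husc x t a hxa).mono fun _ => le_of_lt)
    ((husc _ t c hzc).mono fun _ => le_of_lt) ?_
  have hlim : Tendsto (fun s => a + s / s₁ * (c - a) - s * γ) (𝓝 0) (𝓝 a) := by
    have : Continuous fun s => a + s / s₁ * (c - a) - s * γ := by fun_prop
    simpa using this.tendsto 0
  filter_upwards [eventually_lt_nhds hs₁, hlim.eventually (eventually_lt_nhds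
    (EReal.coe_lt_coe_iff.1 ham))] with s hs hsm _
  exact ⟨hs.le, by linarith⟩

end Family

section Supremum

variable {E T : Type*} [AddCommGroup E] [Module ℝ E] [TopologicalSpace E] {f : T → E → EReal}
  {x : E} {m : ℝ} {ρ : T → ℝ} {p : WeakDual ℝ E}

theorem mem_cclo_of_mem_esubdiff_iSup [IsTopologicalAddGroup E] [ContinuousSMul ℝ E]
    [LocallyConvexSpace ℝ E] [TopologicalSpace T] [CompactSpace T]
    (hconv : ∀ t, EConvexOn' (f t)) (hlsc : ∀ t, LowerSemicontinuous (f t))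
    (hbot : ∀ t y, f t y ≠ ⊥) (husc : ∀ y, UpperSemicontinuous fun t => f t y)
    (hm : (⨆ t, f t x) = m) (hρ : ∀ t, 0 < ρ t) (hp : p ∈ esubdiff (fun y => ⨆ t, f t y) x 0)
    {ε : ℝ} (hε : 0 < ε) :
    p ∈ cclo ((⋃ t ∈ {t | (m : EReal) ≤ f t x}, esubdiff (f t) x ε) ∪
      (⋃ t ∈ {t | (m : EReal) ≤ f t x}ᶜ, ε • esubdiff (sMul (ρ t) (f t)) x ε)) := by
  by_contra hpS
  obtain ⟨z, u, hS, hu⟩ := exists_apply_lt_of_notMem_cclo hpS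
  obtain ⟨γ, huγ, hγp⟩ := exists_between hu
  have hfm : ∀ t, f t x ≤ m := fun t => hm ▸ le_iSup (fun t => f t x) t
  have hlocal : ∀ t, ∀ᶠ q : ℝ × T in 𝓝 (0, t),
      0 < q.1 → f q.2 (x + q.1 • z) ≤ ((m + q.1 * γ : ℝ) : EReal) := by
    intro t
    by_cases ht : (m : EReal) ≤ f t x
    · have hsub : ∀ q ∈ esubdiff (f t) x ε, q z ≤ u :=
        fun q hq => (hS q (Or.inl (mem_biUnion ht hq))).le
      obtain ⟨s₁, hs₁, hlt⟩ := exists_pos_lt_of_forall_esubdiff_apply_le (hconv t) (hlsc t)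
        ((hfm t).antisymm ht) hε huγ hsub
      exact eventually_apply_add_smul_le_of_active hconv husc hfm hs₁
        (hlt.trans_le (EReal.coe_le_coe_iff.2 (by linarith)))
    · obtain ⟨v, hv⟩ : ∃ v : ℝ, f t x = v :=
        ⟨_, (EReal.coe_toReal ((hfm t).trans_lt (EReal.coe_lt_top m)).ne (hbot t x)).symm⟩
      have hsub : ∀ q ∈ esubdiff (sMul (ρ t) (f t)) x ε, q z ≤ u / ε := fun q hq =>
        (le_div_iff₀ hε).2 <| (mul_comm _ _).trans_le
          (hS _ (Or.inr (mem_biUnion ht (smul_mem_smul_set hq)))).le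
      have hρv : sMul (ρ t) (f t) x = ((ρ t * v : ℝ) : EReal) := by
        simp only [sMul_eq_mul (hρ t), hv, EReal.coe_mul]
      obtain ⟨s₁, hs₁, hlt⟩ := exists_pos_lt_of_forall_esubdiff_apply_le ((hconv t).sMul (hρ t))
        ((hlsc t).sMul (hρ t)) hρv hε (lt_add_one (u / ε)) hsub
      refine eventually_apply_add_smul_le_of_inactive hconv husc hs₁ (not_le.1 ht) fun htop => ?_
      simp [sMul, htop] at hlt
  obtain ⟨s, hs, hle⟩ := exists_pos_forall_of_forall_eventually_nhds
    (P := fun s t => f t (x + s • z) ≤ ((m + s * γ : ℝ) : EReal)) hlocal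
  have := apply_sub_le_of_mem_esubdiff hp hm.ge (iSup_le hle)
  rw [add_sub_cancel_left, map_smul, smul_eq_mul] at this
  nlinarith

theorem mem_esubdiff_iSup_of_forall_mem_cclo {μ : ℝ} (hm : (⨆ t, f t x) = m)
    (hmin : ∀ y, (m : EReal) ≤ ⨆ t, f t y) (hρ : ∀ t, 0 < ρ t ∧ ρ t ≤ 1)
    (hμ : ∀ t, (μ : EReal) ≤ sMul (ρ t) (f t) x)
    (hp : ∀ ε, 0 < ε → p ∈ cclo ((⋃ t ∈ {t | (m : EReal) ≤ f t x}, esubdiff (f t) x ε) ∪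
      (⋃ t ∈ {t | (m : EReal) ≤ f t x}ᶜ, ε • esubdiff (sMul (ρ t) (f t)) x ε))) :
    p ∈ esubdiff (fun y => ⨆ t, f t y) x 0 := by
  refine ⟨le_rfl, by simp [hm], by simp [hm], fun y => ?_⟩
  simp only [hm]
  rw [← EReal.le_of_forall_lt_iff_le]
  intro b hb
  have hfb : ∀ t, f t y ≤ b := fun t => (le_iSup (fun t => f t y) t).trans hb.le
  have hmb : m ≤ b := EReal.coe_le_coe_iff.1 ((hmin y).trans hb.le)
  set C := max b 0 - μ
  have hbound : ∀ ε, 0 < ε → p (y - x) ≤ b - m + max ε (ε * (C + ε)) := by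
    intro ε hε
    refine apply_le_of_mem_cclo ?_ (hp ε hε)
    rintro q (hq | hq)
    · obtain ⟨t, ht, hq⟩ := mem_iUnion₂.1 hq
      have := apply_sub_le_of_mem_esubdiff hq ht (hfb t)
      linarith [le_max_left ε (ε * (C + ε))]
    · obtain ⟨t, -, q', hq', rfl⟩ := mem_iUnion₂.1 hq
      have := apply_sub_le_of_mem_esubdiff hq' (hμ t) (sMul_le_max (hρ t).1 (hρ t).2 (hfb t))
      calc ε * q' (y - x) ≤ ε * (C + ε) := mul_le_mul_of_nonneg_left (by linarith) hε.le
        _ ≤ b - m + max ε (ε * (C + ε)) := by linarith [le_max_right ε (ε * (C + ε))]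
  have hlim : Tendsto (fun ε => b - m + max ε (ε * (C + ε))) (𝓝[>] 0) (𝓝 (b - m)) := by
    have : Continuous fun ε => b - m + max ε (ε * (C + ε)) := by fun_prop
    simpa using (this.tendsto 0).mono_left nhdsWithin_le_nhds
  have := ge_of_tendsto hlim (eventually_nhdsWithin_of_forall hbound)
  rw [← EReal.coe_add, EReal.coe_le_coe_iff, ← map_sub]
  linarith

end Supremum

theorem statement15_general {T : Type*} [TopologicalSpace T] [CompactSpace T] [Nonempty T]
    (f : T → X → EReal) (hf : ∀ t, Gamma0 (f t))
    (husc : ∀ z : X, UpperSemicontinuous fun t => f t z)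
    (x : X) (hx : x ∈ edom (fun z => ⨆ t, f t z))
    (hmin : ∀ y : X, (⨆ t, f t x) ≤ ⨆ t, f t y)
    (ρ : T → ℝ) (hρ : ∀ t, 0 < ρ t ∧ ρ t ≤ 1)
    (hinf : (⊥ : EReal) < ⨅ t, sMul (ρ t) (f t) x) :
    esubdiff (fun z => ⨆ t, f t z) x 0 =
      ⋂ (ε : ℝ) (_ : 0 < ε), cclo
        ((⋃ t ∈ {t : T | (⨆ s, f s x) ≤ f t x}, esubdiff (f t) x ε) ∪
         (⋃ t ∈ {t : T | (⨆ s, f s x) ≤ f t x}ᶜ,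
            ε • esubdiff (sMul (ρ t) (f t)) x ε)) := by
  have hbot : ∀ t y, f t y ≠ ⊥ := fun t => (hf t).1
  obtain ⟨t₀⟩ := ‹Nonempty T›
  obtain ⟨m, hm⟩ : ∃ m : ℝ, (⨆ t, f t x) = m := ⟨_, (EReal.coe_toReal hx
    (ne_bot_of_le_ne_bot (hbot t₀ x) (le_iSup (fun t => f t x) t₀))).symm⟩
  obtain ⟨μ, -, hμ⟩ := EReal.lt_iff_exists_real_btwn.1 hinf
  rw [hm]
  refine Subset.antisymm (fun p hp => mem_iInter₂.2 fun ε hε => ?_) fun p hp => ?_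
  · exact mem_cclo_of_mem_esubdiff_iSup (fun t => (hf t).2.2.1) (fun t => (hf t).2.2.2) hbot
      husc hm (fun t => (hρ t).1) hp hε
  · exact mem_esubdiff_iSup_of_forall_mem_cclo hm (fun y => hm ▸ hmin y) hρ
      (fun t => hμ.le.trans (iInf_le _ t)) (mem_iInter₂.1 hp)

/-- Theorem `t1`, equality at a minimizer: under (SH), if `x` is a global
minimizer of `f`, with `0 < ρ_t ≤ 1` and `inf_t ρ_t f_t(x) > −∞`,
`∂f(x) = ⋂_{ε>0} co‾((⋃_{t∈T(x)} ∂_ε f_t(x)) ∪ (⋃_{t∉T(x)} ε·∂_ε(ρ_t f_t)(x)))`. -/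
theorem statement15 {T : Type*} [TopologicalSpace T] [CompactSpace T] [T2Space T] [Nonempty T]
    (f : T → X → EReal) (hf : ∀ t, Gamma0 (f t))
    (husc : ∀ z : X, UpperSemicontinuous fun t => f t z)
    (x : X) (hx : x ∈ edom (fun z => ⨆ t, f t z))
    (hmin : ∀ y : X, (⨆ t, f t x) ≤ ⨆ t, f t y)
    (ρ : T → ℝ) (hρ : ∀ t, 0 < ρ t ∧ ρ t ≤ 1)
    (hinf : (⊥ : EReal) < ⨅ t, sMul (ρ t) (f t) x) :
    esubdiff (fun z => ⨆ t, f t z) x 0 =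
      ⋂ (ε : ℝ) (_ : 0 < ε), cclo
        ((⋃ t ∈ {t : T | (⨆ s, f s x) ≤ f t x}, esubdiff (f t) x ε) ∪
         (⋃ t ∈ {t : T | (⨆ s, f s x) ≤ f t x}ᶜ,
            ε • esubdiff (sMul (ρ t) (f t)) x ε)) :=
  statement15_general f hf husc x hx hmin ρ hρ hinf
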